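/- Under the hypotheses of the previous setting (Haar-random $U \in \mathbb{U}(N)$, $C_0$ a rank-$m$ Hermitian projection, $\Pi_A$ the projection onto the first $N_A$ coordinates), the Haar average satisfies $\int dU\, \mathrm{Tr}\big[(\Pi_A U C_0 U^\dagger \Pi_A^\dagger)^2\big] = \frac{Nm - m^2}{N(N^2-1)} N_A^2 + \frac{Nm^2 - m}{N(N^2-1)} N_A$. -/

import Mathlib

/-!
Write `X = U C₀ U†` and `I(a,b,c,d) = 𝔼[X_ab X_cd]`. Left invariance of `μ` makes `I` invariant
under conjugation of `X` by any fixed unitary. Permutation and diagonal phase matrices force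
`I(a,b,c,d)` to be `α` when all indices agree, `γ` when `a = b ≠ c = d`, `β` when `a = d ≠ b = c`,
and `0` otherwise; a reflection mixing two coordinates gives `α = β + γ`. Taking expectations of
`(Tr X)² = m²` and `Tr X² = Tr C₀² = m` gives `N α + N(N-1) γ = m²` and `N α + N(N-1) β = m`,
while the left-hand side equals `N_A α + N_A(N_A-1) β`. Solving the linear system gives the claim.
-/

open MeasureTheory Matrix

noncomputable section

instance matrixMeasurableSpace (m n : Type*) : MeasurableSpace (Matrix m n ℂ) :=
  inferInstanceAs (MeasurableSpace (m → n → ℂ))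

/-- The `N_A × N` matrix projecting onto the first `N_A` coordinates. -/
def projA (NA N : ℕ) : Matrix (Fin NA) (Fin N) ℂ :=
  Matrix.of fun i j => if (i : ℕ) = (j : ℕ) then 1 else 0

lemma Equiv.Perm.exists_apply_eq_pair {β : Type*} {z o a c : β} (hzo : z ≠ o) (hac : a ≠ c) :
    ∃ σ : Equiv.Perm β, σ z = a ∧ σ o = c := by
  have hinj : ∀ {x y : β}, x ≠ y → Function.Injective ![x, y] := fun hxy i j => by
    fin_cases i <;> fin_cases j <;> simp [hxy, hxy.symm]
  obtain ⟨σ, hσ⟩ := Equiv.Perm.exists_extending_pair _ _ (hinj hzo) (hinj hac)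
  exact ⟨σ, hσ 0, hσ 1⟩

lemma Continuous.integrable_of_compactSpace {X E : Type*} [TopologicalSpace X] [CompactSpace X]
    [MeasurableSpace X] [OpensMeasurableSpace X] [NormedAddCommGroup E] {μ : Measure X}
    [IsFiniteMeasure μ] {f : X → E} (hf : Continuous f) : Integrable f μ :=
  hf.integrable_of_hasCompactSupport (.of_compactSpace f)

lemma Fintype.sum_sum_ite_eq {ι R : Type*} [Fintype ι] [DecidableEq ι] [CommRing R] (x y : R) :
    ∑ i : ι, ∑ j : ι, (if i = j then x else y) =
      Fintype.card ι * x + ((Fintype.card ι : R) ^ 2 - Fintype.card ι) * y := by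
  have hsplit : ∀ i j : ι, (if i = j then x else y) = (if i = j then x - y else 0) + y := by
    intro i j; split_ifs <;> ring
  simp only [hsplit, Finset.sum_add_distrib, Finset.sum_ite_eq, Finset.mem_univ, if_true,
    Finset.sum_const, Finset.card_univ, nsmul_eq_mul]
  ring

namespace Matrix

variable {n R : Type*} [Fintype n]

lemma trace_sq_eq_sum_sum [DecidableEq n] [Semiring R] (M : Matrix n n R) :
    (M ^ 2).trace = ∑ i, ∑ j, M i j * M j i := by
  simp [sq, trace, mul_apply]

lemma mul_mul_conjTranspose_apply_mul_apply [CommSemiring R] [StarRing R] (V Y : Matrix n n R)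
    (a b c d : n) :
    (V * Y * Vᴴ) a b * (V * Y * Vᴴ) c d =
      ∑ k, V a k * ∑ l, star (V b l) * ∑ k', V c k' * ∑ l', star (V d l') * (Y k l * Y k' l') := by
  rw [Matrix.mul_assoc, mul_comm]
  simp only [mul_apply, conjTranspose_apply, Finset.sum_mul, Finset.mul_sum]
  refine Finset.sum_congr rfl fun k _ => Finset.sum_congr rfl fun l _ => ?_
  refine Finset.sum_congr rfl fun k' _ => Finset.sum_congr rfl fun l' _ => ?_
  ring

variable [DecidableEq n]

section Householder

variable {𝕜 : Type*} [RCLike 𝕜]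

def householder (w : n → 𝕜) : Matrix n n 𝕜 :=
  1 - (2 / (star w ⬝ᵥ w)) • vecMulVec w (star w)

open scoped ComplexOrder in
lemma householder_mem_unitaryGroup {w : n → 𝕜} (hw : w ≠ 0) :
    householder w ∈ unitaryGroup n 𝕜 := by
  set s := star w ⬝ᵥ w
  have hs : s ≠ 0 := dotProduct_star_self_eq_zero.not.mpr hw
  have hherm : (householder w)ᴴ = householder w := by
    simp [householder, conjTranspose_smul, ← star_dotProduct]
  rw [mem_unitaryGroup_iff, star_eq_conjTranspose, hherm, householder]
  simp only [sub_mul, mul_sub, one_mul, mul_one, smul_mul_smul_comm, vecMulVec_mul_vecMulVec,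
    vecMulVec_smul, smul_smul]
  rw [show 2 / s * (2 / s) * s = 2 / s + 2 / s by field_simp; ring, add_smul]
  abel

lemma householder_apply (w : n → 𝕜) (i j : n) :
    householder w i j = (if i = j then 1 else 0) - 2 / (star w ⬝ᵥ w) * (w i * star (w j)) := by
  simp [householder, one_apply, vecMulVec_apply]

end Householder

instance : BorelSpace (Matrix n n ℂ) := inferInstanceAs (BorelSpace (n → n → ℂ))

instance : CompactSpace (unitaryGroup n ℂ) := by
  have hbox : IsCompact (Set.univ.pi fun _ => Set.univ.pi fun _ => Metric.closedBall 0 1 :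
      Set (Matrix n n ℂ)) :=
    isCompact_univ_pi fun _ => isCompact_univ_pi fun _ => isCompact_closedBall (0 : ℂ) 1
  have hclosed : IsClosed (unitaryGroup n ℂ : Set (Matrix n n ℂ)) := isClosed_unitary
  refine isCompact_iff_compactSpace.mp (hbox.of_isClosed_subset hclosed fun U hU => ?_)
  simpa using entry_norm_bound_of_unitary hU

end Matrix

lemma projA_mul_mul_conjTranspose {NA N : ℕ} (h : NA ≤ N) (M : Matrix (Fin N) (Fin N) ℂ) :
    projA NA N * M * (projA NA N)ᴴ = M.submatrix (Fin.castLE h) (Fin.castLE h) := by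
  have hP : projA NA N =
      (1 : Matrix (Fin N) (Fin N) ℂ).submatrix (Fin.castLE h) (Equiv.refl _) := by
    ext i j
    simp [projA, one_apply, Fin.ext_iff]
  rw [hP, conjTranspose_submatrix, conjTranspose_one, one_submatrix_mul, mul_submatrix_one,
    submatrix_submatrix]
  rfl

section SecondMoment

variable {n : Type*} [Fintype n] [DecidableEq n]

def conjUnitary (C : Matrix n n ℂ) (U : unitaryGroup n ℂ) : Matrix n n ℂ :=
  (U : Matrix n n ℂ) * C * (U : Matrix n n ℂ)ᴴ

def secondMoment (μ : Measure (unitaryGroup n ℂ)) (C : Matrix n n ℂ) (a b c d : n) : ℂ :=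
  ∫ U, conjUnitary C U a b * conjUnitary C U c d ∂μ

def invariantMoment (α β γ : ℂ) (a b c d : n) : ℂ :=
  if a = b ∧ c = d then (if a = c then α else γ) else if a = d ∧ c = b then β else 0

variable {μ : Measure (unitaryGroup n ℂ)} {C : Matrix n n ℂ}

lemma continuous_conjUnitary_apply (a b : n) : Continuous fun U => conjUnitary C U a b := by
  unfold conjUnitary; fun_prop

lemma conjUnitary_mul (V U : unitaryGroup n ℂ) :
    conjUnitary C (V * U) = (V : Matrix n n ℂ) * conjUnitary C U * (V : Matrix n n ℂ)ᴴ := by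
  simp only [conjUnitary, Submonoid.coe_mul, conjTranspose_mul, Matrix.mul_assoc]

lemma conjUnitary_sq (U : unitaryGroup n ℂ) : conjUnitary C U ^ 2 = conjUnitary (C ^ 2) U := by
  have hU : (U : Matrix n n ℂ)ᴴ * U = 1 := Unitary.star_mul_self_of_mem U.2
  simp only [conjUnitary, sq, Matrix.mul_assoc]
  rw [← Matrix.mul_assoc _ (U : Matrix n n ℂ), hU, Matrix.one_mul]

lemma trace_conjUnitary (U : unitaryGroup n ℂ) : (conjUnitary C U).trace = C.trace := by
  have hU : (U : Matrix n n ℂ)ᴴ * U = 1 := Unitary.star_mul_self_of_mem U.2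
  rw [conjUnitary, trace_mul_cycle, hU, Matrix.one_mul]

lemma integral_sum_sum_conjUnitary [IsFiniteMeasure μ] {ι : Type*} [Fintype ι]
    (a b c d : ι → ι → n) :
    ∫ U, ∑ i, ∑ j, conjUnitary C U (a i j) (b i j) * conjUnitary C U (c i j) (d i j) ∂μ =
      ∑ i, ∑ j, secondMoment μ C (a i j) (b i j) (c i j) (d i j) := by
  have hcont := continuous_conjUnitary_apply (C := C)
  rw [integral_finsetSum _ fun i _ => (by fun_prop : Continuous _).integrable_of_compactSpace]
  refine Finset.sum_congr rfl fun i _ => ?_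
  rw [integral_finsetSum _ fun j _ => (by fun_prop : Continuous _).integrable_of_compactSpace]
  rfl

lemma secondMoment_eq_integral_conj [μ.IsMulLeftInvariant] (V : unitaryGroup n ℂ) (a b c d : n) :
    secondMoment μ C a b c d =
      ∫ U, ((V : Matrix n n ℂ) * conjUnitary C U * (V : Matrix n n ℂ)ᴴ) a b *
        ((V : Matrix n n ℂ) * conjUnitary C U * (V : Matrix n n ℂ)ᴴ) c d ∂μ := by
  simp only [← conjUnitary_mul]
  exact (integral_mul_left_eq_self (fun U => conjUnitary C U a b * conjUnitary C U c d) V).symm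

theorem secondMoment_eq_sum [IsFiniteMeasure μ] [μ.IsMulLeftInvariant] (V : unitaryGroup n ℂ)
    (a b c d : n) :
    secondMoment μ C a b c d = ∑ k, V a k * ∑ l, star (V b l) * ∑ k', V c k' *
      ∑ l', star (V d l') * secondMoment μ C k l k' l' := by
  have hcont := continuous_conjUnitary_apply (C := C)
  have hint : ∀ {f : unitaryGroup n ℂ → ℂ}, Continuous f → Integrable f μ :=
    fun hf => hf.integrable_of_compactSpace
  rw [secondMoment_eq_integral_conj V]
  simp only [mul_mul_conjTranspose_apply_mul_apply]
  rw [integral_finsetSum _ fun k _ => hint (by fun_prop)]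
  refine Finset.sum_congr rfl fun k _ => ?_
  rw [integral_const_mul, integral_finsetSum _ fun l _ => hint (by fun_prop)]
  refine congrArg _ (Finset.sum_congr rfl fun l _ => ?_)
  rw [integral_const_mul, integral_finsetSum _ fun k' _ => hint (by fun_prop)]
  refine congrArg _ (Finset.sum_congr rfl fun k' _ => ?_)
  rw [integral_const_mul, integral_finsetSum _ fun l' _ => hint (by fun_prop)]
  refine congrArg _ (Finset.sum_congr rfl fun l' _ => ?_)
  rw [integral_const_mul]
  rfl

lemma secondMoment_perm [μ.IsMulLeftInvariant] (σ : Equiv.Perm n) (a b c d : n) :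
    secondMoment μ C (σ a) (σ b) (σ c) (σ d) = secondMoment μ C a b c d := by
  have hσ : σ.permMatrix ℂ ∈ unitaryGroup n ℂ := by
    rw [mem_unitaryGroup_iff, star_eq_conjTranspose, conjTranspose_permMatrix, ← permMatrix_mul,
      inv_mul_cancel, permMatrix_one]
  conv_rhs => rw [secondMoment_eq_integral_conj ⟨_, hσ⟩]
  simp [secondMoment, conjTranspose_permMatrix, PEquiv.toMatrix_toPEquiv_mul,
    PEquiv.mul_toMatrix_toPEquiv, Equiv.Perm.inv_def]

lemma secondMoment_phase [μ.IsMulLeftInvariant] (w : n → ℂ) (hw : ∀ i, star (w i) * w i = 1)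
    (a b c d : n) :
    w a * star (w b) * w c * star (w d) * secondMoment μ C a b c d = secondMoment μ C a b c d := by
  have hmem : diagonal w ∈ unitaryGroup n ℂ := by
    rw [mem_unitaryGroup_iff', star_eq_conjTranspose, diagonal_conjTranspose, diagonal_mul_diagonal]
    exact diagonal_eq_one.mpr (funext hw)
  conv_rhs => rw [secondMoment_eq_integral_conj ⟨_, hmem⟩]
  simp only [diagonal_conjTranspose, mul_diagonal, diagonal_mul, Pi.star_apply]
  rw [secondMoment, ← integral_const_mul]
  congr 1 with U
  ring

lemma secondMoment_eq_zero_of_phase [μ.IsMulLeftInvariant] {a b c d : n} (p : n)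
    (h : (if a = p then Complex.I else 1) * star (if b = p then Complex.I else 1) *
      (if c = p then Complex.I else 1) * star (if d = p then Complex.I else 1) ≠ 1) :
    secondMoment μ C a b c d = 0 := by
  have hw : ∀ i, star (if i = p then Complex.I else 1) * (if i = p then Complex.I else 1) = 1 := by
    intro i; split_ifs <;> simp
  have hfix := secondMoment_phase (μ := μ) (C := C) _ hw a b c d
  by_contra hne
  exact h ((mul_eq_right₀ hne).mp hfix)

lemma secondMoment_eq_zero [μ.IsMulLeftInvariant] {a b c d : n}
    (h : ¬ ((a = b ∧ c = d) ∨ (a = d ∧ c = b))) : secondMoment μ C a b c d = 0 := by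
  by_cases hab : a = b
  · exact secondMoment_eq_zero_of_phase c (by
      have hcd : c ≠ d := fun hcd => h (.inl ⟨hab, hcd⟩)
      subst hab; by_cases hac : a = c <;> simp [hac, hcd.symm, Complex.ext_iff])
  by_cases had : a = d
  · exact secondMoment_eq_zero_of_phase c (by
      have hcb : c ≠ b := fun hcb => h (.inr ⟨had, hcb⟩)
      subst had; by_cases hac : a = c <;> simp [hac, hcb.symm, Complex.ext_iff])
  · exact secondMoment_eq_zero_of_phase a (by
      by_cases hac : c = a <;> norm_num [hac, Ne.symm hab, Ne.symm had, Complex.ext_iff])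

theorem secondMoment_eq_invariantMoment [μ.IsMulLeftInvariant] {z o : n} (hzo : z ≠ o) :
    secondMoment μ C = invariantMoment (secondMoment μ C z z z z) (secondMoment μ C z o o z)
      (secondMoment μ C z z o o) := by
  ext a b c d
  unfold invariantMoment
  split_ifs with hbal hac hcross
  · obtain ⟨rfl, rfl⟩ := hbal
    subst hac
    simpa using secondMoment_perm (μ := μ) (C := C) (Equiv.swap z a) z z z z
  · obtain ⟨rfl, rfl⟩ := hbal
    obtain ⟨σ, rfl, rfl⟩ := Equiv.Perm.exists_apply_eq_pair hzo hac
    exact secondMoment_perm σ z z o o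
  · obtain ⟨rfl, rfl⟩ := hcross
    have hac : a ≠ c := fun hac => hbal ⟨hac, hac.symm⟩
    obtain ⟨σ, rfl, rfl⟩ := Equiv.Perm.exists_apply_eq_pair hzo hac
    exact secondMoment_perm σ z o o z
  · exact secondMoment_eq_zero (not_or.mpr ⟨hbal, hcross⟩)

theorem secondMoment_diag_eq_add [IsFiniteMeasure μ] [μ.IsMulLeftInvariant] {u v : n}
    (huv : u ≠ v) :
    secondMoment μ C u u u u = secondMoment μ C u v v u + secondMoment μ C u u v v := by
  set w : n → ℂ := Pi.single u 1 + Pi.single v 2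
  have hw : w ≠ 0 := fun h => by simpa [w, huv] using congrFun h u
  -- Monomial unitaries cannot relate `α` to `β` and `γ`; this reflection mixes `u` and `v`.
  have hrow : ∀ f : n → ℂ, (∑ k, householder w u k * f k = 3 / 5 * f u - 4 / 5 * f v) ∧
      ∑ k, star (householder w u k) * f k = 3 / 5 * f u - 4 / 5 * f v := fun f => by
    constructor <;>
    · rw [Fintype.sum_eq_add u v huv fun k hk => by
        simp [householder_apply, w, hk.1, hk.2, Ne.symm hk.1]]
      simp [householder_apply, w, huv, huv.symm]
      ring
  have key := secondMoment_eq_sum (μ := μ) (C := C) ⟨_, householder_mem_unitaryGroup hw⟩ u u u u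
  simp only [fun f => (hrow f).1, fun f => (hrow f).2] at key
  rw [secondMoment_eq_invariantMoment huv] at key ⊢
  simp [invariantMoment, huv, huv.symm] at key ⊢
  linear_combination 625 / 288 * key

theorem integral_trace_sq_submatrix [IsFiniteMeasure μ] [μ.IsMulLeftInvariant] {ι : Type*}
    [Fintype ι] [DecidableEq ι] {e : ι → n} (he : Function.Injective e) {z o : n} (hzo : z ≠ o) :
    ∫ U, (((conjUnitary C U).submatrix e e) ^ 2).trace ∂μ =
      Fintype.card ι * secondMoment μ C z z z z +
        ((Fintype.card ι : ℂ) ^ 2 - Fintype.card ι) * secondMoment μ C z o o z := by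
  simp only [trace_sq_eq_sum_sum, submatrix_apply]
  rw [integral_sum_sum_conjUnitary (fun i _ => e i) (fun _ j => e j) (fun _ j => e j)
    (fun i _ => e i), ← Fintype.sum_sum_ite_eq]
  conv_lhs => rw [secondMoment_eq_invariantMoment hzo]
  refine Finset.sum_congr rfl fun i _ => Finset.sum_congr rfl fun j _ => ?_
  by_cases hij : i = j
  · simp [invariantMoment, hij]
  · simp [invariantMoment, hij, he.ne hij, (he.ne hij).symm]

theorem card_mul_add_secondMoment_eq_sq_trace [IsProbabilityMeasure μ] [μ.IsMulLeftInvariant]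
    {z o : n} (hzo : z ≠ o) :
    Fintype.card n * secondMoment μ C z z z z +
        ((Fintype.card n : ℂ) ^ 2 - Fintype.card n) * secondMoment μ C z z o o = C.trace ^ 2 := by
  calc _ = ∑ i, ∑ j, secondMoment μ C i i j j := by
        rw [← Fintype.sum_sum_ite_eq]
        conv_rhs => rw [secondMoment_eq_invariantMoment hzo]
        simp [invariantMoment]
    _ = ∫ U, ∑ i, ∑ j, conjUnitary C U i i * conjUnitary C U j j ∂μ :=
        (integral_sum_sum_conjUnitary (fun i _ => i) (fun i _ => i) (fun _ j => j)
          (fun _ j => j)).symm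
    _ = ∫ _, C.trace ^ 2 ∂μ := by
        congr with U
        rw [← trace_conjUnitary U, sq, trace, Finset.sum_mul_sum]
        rfl
    _ = C.trace ^ 2 := by simp

theorem card_mul_add_secondMoment_eq_trace_sq [IsProbabilityMeasure μ] [μ.IsMulLeftInvariant]
    {z o : n} (hzo : z ≠ o) :
    Fintype.card n * secondMoment μ C z z z z +
        ((Fintype.card n : ℂ) ^ 2 - Fintype.card n) * secondMoment μ C z o o z = (C ^ 2).trace := by
  rw [← integral_trace_sq_submatrix Function.injective_id hzo]
  simp [submatrix_id_id, conjUnitary_sq, trace_conjUnitary]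

end SecondMoment

theorem statement2_general (N NA m : ℕ) (hN : 2 ≤ N) (hNAN : NA ≤ N)
    (μ : Measure (Matrix.unitaryGroup (Fin N) ℂ)) [IsProbabilityMeasure μ]
    (hinv : ∀ V : Matrix.unitaryGroup (Fin N) ℂ,
      Measure.map (fun U => V * U) μ = μ)
    (C0 : Matrix (Fin N) (Fin N) ℂ) (hproj : C0 * C0 = C0)
    (htr : C0.trace = (m : ℂ)) :
    (∫ U : Matrix.unitaryGroup (Fin N) ℂ,
        ((projA NA N * (U : Matrix (Fin N) (Fin N) ℂ) * C0 *
            (U : Matrix (Fin N) (Fin N) ℂ)ᴴ * (projA NA N)ᴴ)^2).trace ∂μ)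
      = (((N : ℂ) * m - (m : ℂ)^2) / ((N : ℂ) * ((N : ℂ)^2 - 1))) * (NA : ℂ)^2 +
        (((N : ℂ) * m^2 - (m : ℂ)) / ((N : ℂ) * ((N : ℂ)^2 - 1))) * (NA : ℂ) := by
  set z : Fin N := ⟨0, by omega⟩
  set o : Fin N := ⟨1, by omega⟩
  have hzo : z ≠ o := by simp [z, o]
  have : μ.IsMulLeftInvariant := ⟨hinv⟩
  set α := secondMoment μ C0 z z z z
  set β := secondMoment μ C0 z o o z
  set γ := secondMoment μ C0 z z o o
  have hLHS := integral_trace_sq_submatrix (μ := μ) (C := C0) (Fin.castLE_injective hNAN) hzo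
  simp only [← projA_mul_mul_conjTranspose hNAN, conjUnitary, Matrix.mul_assoc] at hLHS
  have hβ := card_mul_add_secondMoment_eq_trace_sq (μ := μ) (C := C0) hzo
  rw [sq C0, hproj, htr, Fintype.card_fin] at hβ
  have hγ := card_mul_add_secondMoment_eq_sq_trace (μ := μ) (C := C0) hzo
  rw [htr, Fintype.card_fin] at hγ
  have hrel : α = β + γ := secondMoment_diag_eq_add hzo
  have hN0 : (N : ℂ) ≠ 0 := by exact_mod_cast (by omega : N ≠ 0)
  have hN1 : (N : ℂ) ^ 2 - 1 ≠ 0 := by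
    rw [sub_ne_zero, ← Nat.cast_pow, ← Nat.cast_one, Ne, Nat.cast_inj]
    nlinarith
  have hβval : β * (N * (N ^ 2 - 1)) = N * m - m ^ 2 := by
    linear_combination N * hβ - hγ - (N ^ 2 - N) * hrel
  have hγval : γ * (N * (N ^ 2 - 1)) = N * m ^ 2 - m := by
    linear_combination N * hγ - hβ - (N ^ 2 - N) * hrel
  simp only [Matrix.mul_assoc, hLHS, Fintype.card_fin]
  rw [div_mul_eq_mul_div, div_mul_eq_mul_div, ← add_div, eq_div_iff (mul_ne_zero hN0 hN1)]
  linear_combination (NA : ℂ) * (N * (N ^ 2 - 1)) * hrel + NA ^ 2 * hβval + NA * hγval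

/-- `∫ dU Tr[(Π_A U C₀ U† Π_A†)²] = αN_A² + βN_A` with
`α = (Nm-m²)/(N(N²-1))`, `β = (Nm²-m)/(N(N²-1))`, for Haar measure on `U(N)`. -/
theorem statement2 (N NA m : ℕ) (hN : 2 ≤ N) (hNA1 : 1 ≤ NA) (hNAN : NA ≤ N) (hm : m ≤ N)
    (μ : Measure (Matrix.unitaryGroup (Fin N) ℂ)) [IsProbabilityMeasure μ]
    (hinv : ∀ V : Matrix.unitaryGroup (Fin N) ℂ,
      Measure.map (fun U => V * U) μ = μ)
    (C0 : Matrix (Fin N) (Fin N) ℂ) (hherm : C0ᴴ = C0) (hproj : C0 * C0 = C0)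
    (htr : C0.trace = (m : ℂ)) :
    (∫ U : Matrix.unitaryGroup (Fin N) ℂ,
        ((projA NA N * (U : Matrix (Fin N) (Fin N) ℂ) * C0 *
            (U : Matrix (Fin N) (Fin N) ℂ)ᴴ * (projA NA N)ᴴ)^2).trace ∂μ)
      = (((N : ℂ) * m - (m : ℂ)^2) / ((N : ℂ) * ((N : ℂ)^2 - 1))) * (NA : ℂ)^2 +
        (((N : ℂ) * m^2 - (m : ℂ)) / ((N : ℂ) * ((N : ℂ)^2 - 1))) * (NA : ℂ) :=
  statement2_general N NA m hN hNAN μ hinv C0 hproj htr
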